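/- arXiv:2303.01280 — 2 statements merged into one kernel-verified Lean document; each statement's English description precedes it below -/
import Mathlib

section
/- Let (X,d,m) be a length PI space and let E ⊆ X be a set of finite perimeter with m(E) > 0 and m(X \ E) > 0. Then P(E) > 0. -/
open MeasureTheory Metric Set Filter Topology ENNReal Bornology
open scoped symmDiff

noncomputable section

variable {X : Type*}

/-- The slope (pointwise Lipschitz constant) of `f` at `x`, computed within `Ω`.
It vanishes at points that are isolated in `Ω`. -/
def slopeOn [MetricSpace X] (Ω : Set X) (f : X → ℝ) (x : X) : ℝ≥0∞ :=
  Filter.limsup (fun y => ENNReal.ofReal (|f x - f y| / dist x y)) (𝓝[Ω \ {x}] x)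

/-- The slope of `f`. -/
def mSlope [MetricSpace X] (f : X → ℝ) (x : X) : ℝ≥0∞ := slopeOn Set.univ f x

/-- `f` is locally Lipschitz on `Ω`. -/
def LocLipOn [MetricSpace X] (Ω : Set X) (f : X → ℝ) : Prop :=
  ∀ x ∈ Ω, ∃ r > (0:ℝ), ∃ K : NNReal, LipschitzOnWith K f (Metric.ball x r ∩ Ω)

/-- Convergence `fn → f` in `L¹_loc(Ω)` w.r.t. the measure `m`. -/
def TendstoL1loc [MetricSpace X] [MeasurableSpace X] (m : Measure X) (Ω : Set X)
    (fn : ℕ → X → ℝ) (f : X → ℝ) : Prop :=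
  ∀ K : Set X, K ⊆ Ω → IsCompact K →
    Tendsto (fun n => ∫⁻ x in K, ENNReal.ofReal |fn n x - f x| ∂m) atTop (𝓝 0)

/-- The total variation `|Df|(B)` of `f : X → ℝ` on the set `B`. -/
def totVar [MetricSpace X] [MeasurableSpace X] (m : Measure X) (f : X → ℝ) (B : Set X) : ℝ≥0∞ :=
  ⨅ (Ω : Set X) (_ : IsOpen Ω) (_ : B ⊆ Ω),
    ⨅ (fn : ℕ → X → ℝ) (_ : ∀ n, LocLipOn Ω (fn n)) (_ : TendstoL1loc m Ω fn f),
      Filter.liminf (fun n => ∫⁻ x in Ω, slopeOn Ω (fn n) x ∂m) atTop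

/-- The perimeter `P(E, B)` of a set `E` in `B`. -/
def Per [MetricSpace X] [MeasurableSpace X] (m : Measure X) (E B : Set X) : ℝ≥0∞ :=
  totVar m (Set.indicator E fun _ => (1:ℝ)) B

/-- `E` has locally finite perimeter. -/
def HasLocFinPer [MetricSpace X] [MeasurableSpace X] (m : Measure X) (E : Set X) : Prop :=
  ∀ x : X, ∃ r > (0:ℝ), Per m E (Metric.ball x r) < ∞

/-- `E` has finite perimeter. -/
def HasFinPer [MetricSpace X] [MeasurableSpace X] (m : Measure X) (E : Set X) : Prop :=
  Per m E Set.univ < ∞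

/-- `m` is finite on bounded sets. -/
def BoundedlyFinite [MetricSpace X] [MeasurableSpace X] (m : Measure X) : Prop :=
  ∀ B : Set X, Bornology.IsBounded B → m B < ∞

/-- Uniformly locally doubling with doubling function `C_D`. -/
def UnifLocDoublingWith [MetricSpace X] [MeasurableSpace X] (C_D : ℝ → ℝ) (m : Measure X) : Prop :=
  ∀ R : ℝ, 0 < R → ∀ x : X, ∀ r : ℝ, 0 < r → r < R →
    m (Metric.ball x (2 * r)) ≤ ENNReal.ofReal (C_D R) * m (Metric.ball x r)

/-- Weak local (1,1)-Poincaré inequality with dilation `lam` and constant function `C_P`. -/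
def WeakPoincareWith [MetricSpace X] [MeasurableSpace X] (lam : ℝ) (C_P : ℝ → ℝ)
    (m : Measure X) : Prop :=
  ∀ f : X → ℝ, LocLipOn Set.univ f → ∀ R : ℝ, 0 < R → ∀ x : X, ∀ r : ℝ, 0 < r → r < R →
    (∫⁻ y in Metric.ball x r,
        ENNReal.ofReal |f y - ⨍ z in Metric.ball x r, f z ∂m| ∂m) / m (Metric.ball x r)
      ≤ ENNReal.ofReal (C_P R * r) *
          ((∫⁻ y in Metric.ball x (lam * r), mSlope f y ∂m) / m (Metric.ball x (lam * r)))

/-- `(X, d, m)` is a PI space. -/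
def IsPIspace [MetricSpace X] [MeasurableSpace X] (m : Measure X) : Prop :=
  (∃ C_D : ℝ → ℝ, (∀ R, 0 < R → 0 < C_D R) ∧ UnifLocDoublingWith C_D m) ∧
  (∃ lam : ℝ, 1 ≤ lam ∧ ∃ C_P : ℝ → ℝ, (∀ R, 0 < R → 0 < C_P R) ∧ WeakPoincareWith lam C_P m)

/-- `(X, d)` is a length space: the distance between two points is the infimum of the
lengths of continuous curves joining them. -/
def IsLengthSpace (X : Type*) [MetricSpace X] : Prop :=
  ∀ p q : X, ENNReal.ofReal (dist p q) =
    ⨅ (γ : ℝ → X) (_ : ContinuousOn γ (Set.Icc 0 1)) (_ : γ 0 = p) (_ : γ 1 = q),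
      eVariationOn γ (Set.Icc 0 1)

/-- Essential interior `E^{(1)}`. -/
def essInt [MetricSpace X] [MeasurableSpace X] (m : Measure X) (E : Set X) : Set X :=
  { x | Tendsto (fun r : ℝ => m (E ∩ Metric.ball x r) / m (Metric.ball x r)) (𝓝[>] 0) (𝓝 1) }

/-- Essential exterior `E^{(0)}`. -/
def essExt [MetricSpace X] [MeasurableSpace X] (m : Measure X) (E : Set X) : Set X :=
  { x | Tendsto (fun r : ℝ => m (E ∩ Metric.ball x r) / m (Metric.ball x r)) (𝓝[>] 0) (𝓝 0) }

/-- Essential boundary `∂^e E`. -/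
def essBdry [MetricSpace X] [MeasurableSpace X] (m : Measure X) (E : Set X) : Set X :=
  (essInt m E ∪ essExt m E)ᶜ

/-- The two deformation inequalities hold for `E` at `x` with radius `R` and constant `C`. -/
def DeformIneq [MetricSpace X] [MeasurableSpace X] (m : Measure X) (E : Set X) (x : X)
    (R C : ℝ) : Prop :=
  ∀ y ∈ Metric.ball x R, ∀ r ∈ Set.Ioo (0:ℝ) R,
    Per m (E \ Metric.ball y r) (Metric.ball x (2 * R)) ≤
      ENNReal.ofReal C * m (Metric.ball y r ∩ E) / ENNReal.ofReal r +
        Per m E (Metric.ball x (2 * R)) ∧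
    Per m (E ∪ Metric.ball y r) (Metric.ball x (2 * R)) ≤
      ENNReal.ofReal C * m (Metric.ball y r \ E) / ENNReal.ofReal r +
        Per m E (Metric.ball x (2 * R))

/-- The deformation inequalities hold for `E` at `x` with radius `R` and some constant. -/
def DeformAt [MetricSpace X] [MeasurableSpace X] (m : Measure X) (E : Set X) (x : X)
    (R : ℝ) : Prop :=
  0 < R ∧ R ≤ 1 ∧ ∃ C : ℝ, 0 ≤ C ∧ DeformIneq m E x R C

/-- `R_x(E)`: the maximal radius in `(0,1]` for which the deformation inequalities hold. -/
def deformRadius [MetricSpace X] [MeasurableSpace X] (m : Measure X) (E : Set X) (x : X) : ℝ :=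
  sSup { R : ℝ | DeformAt m E x R }

/-- `(X, d, m)` has the deformation property. -/
def DeformationProperty [MetricSpace X] [MeasurableSpace X] (m : Measure X) : Prop :=
  ∀ E : Set X, MeasurableSet E → HasLocFinPer m E → ∀ x : X, ∃ R : ℝ, DeformAt m E x R

/-- `E` is a volume-constrained minimizer of the perimeter. -/
def VolConstMin [MetricSpace X] [MeasurableSpace X] (m : Measure X) (E : Set X) : Prop :=
  MeasurableSet E ∧ HasLocFinPer m E ∧
    ∀ F K : Set X, MeasurableSet F → IsCompact K →
      m ((E ∆ F) \ K) = 0 → m (E ∩ K) = m (F ∩ K) → Per m E K ≤ Per m F K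

/-- `E` is an isoperimetric set. -/
def IsIsoperimetricSet [MetricSpace X] [MeasurableSpace X] (m : Measure X) (E : Set X) : Prop :=
  MeasurableSet E ∧ HasFinPer m E ∧ 0 < m E ∧ m E < ∞ ∧
    ∀ F : Set X, MeasurableSet F → m F = m E → Per m E Set.univ ≤ Per m F Set.univ


/-!
If `P(E) = 0`, there are locally Lipschitz `g` with arbitrarily small `∫ lip g`, converging to
`1_E` in `L¹_loc`. Take a ball `B` meeting both `E` and its complement in positive measure and,
by inner regularity of finite measures on Polish spaces, a compact `K ⊆ B` that still does (the
`L¹_loc` convergence is only tested on compact sets). The Poincaré inequality on `B` makes `g`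
`L¹`-close to a constant on `K`, whereas `1_E` stays at `L¹(K)`-distance at least
`min (m (K ∩ E)) (m (K \ E))` from every constant.
-/

lemma min_measure_le_setLIntegral_abs_indicator_sub {α : Type*} [MeasurableSpace α]
    {μ : Measure α} {E B : Set α} (hE : MeasurableSet E) (hB : MeasurableSet B) (c : ℝ) :
    min (μ (B ∩ E)) (μ (B \ E)) ≤
      ∫⁻ z in B, ENNReal.ofReal |Set.indicator E (fun _ => (1:ℝ)) z - c| ∂μ := by
  set M := min (μ (B ∩ E)) (μ (B \ E))
  have h_in : ∫⁻ z in B ∩ E, ENNReal.ofReal |Set.indicator E (fun _ => (1:ℝ)) z - c| ∂μ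
      = ENNReal.ofReal |1 - c| * μ (B ∩ E) := by
    rw [setLIntegral_congr_fun (hB.inter hE) fun z hz => by rw [indicator_of_mem hz.2],
      setLIntegral_const]
  have h_out : ∫⁻ z in B \ E, ENNReal.ofReal |Set.indicator E (fun _ => (1:ℝ)) z - c| ∂μ
      = ENNReal.ofReal |c| * μ (B \ E) := by
    rw [setLIntegral_congr_fun (hB.diff hE) fun z hz => by rw [indicator_of_notMem hz.2],
      setLIntegral_const, zero_sub, abs_neg]
  have h_one : 1 ≤ ENNReal.ofReal |1 - c| + ENNReal.ofReal |c| := by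
    rw [← ENNReal.ofReal_add (abs_nonneg _) (abs_nonneg _), ← ENNReal.ofReal_one]
    exact ENNReal.ofReal_le_ofReal (by simpa using abs_add_le (1 - c) c)
  rw [← lintegral_inter_add_sdiff _ _ hE, h_in, h_out]
  calc M ≤ (ENNReal.ofReal |1 - c| + ENNReal.ofReal |c|) * M := le_mul_of_one_le_left' h_one
    _ = ENNReal.ofReal |1 - c| * M + ENNReal.ofReal |c| * M := add_mul _ _ _
    _ ≤ _ := by gcongr <;> simp [M]

section

variable [MetricSpace X]

lemma LocLipOn.continuous {f : X → ℝ} (hf : LocLipOn Set.univ f) :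
    Continuous f := by
  refine continuous_iff_continuousAt.2 fun x => ?_
  obtain ⟨r, hr, K, hK⟩ := hf x trivial
  rw [inter_univ] at hK
  exact hK.continuousOn.continuousAt (ball_mem_nhds x hr)

variable [MeasurableSpace X] {m : Measure X}

lemma eventually_measure_inter_ball_pos {s : Set X} (hs : 0 < m s) (x : X) :
    ∀ᶠ n : ℕ in atTop, 0 < m (ball x n ∩ s) := by
  have h_mono : Monotone fun n : ℕ => ball x n ∩ s := fun i j hij =>
    inter_subset_inter_left _ (ball_subset_ball (Nat.cast_le.2 hij))
  have h_union : ⋃ n : ℕ, ball x n ∩ s = s := by rw [← iUnion_inter, iUnion_ball_nat, univ_inter]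
  have := tendsto_measure_iUnion_atTop (μ := m) h_mono
  rw [h_union] at this
  exact this.eventually_const_lt hs

lemma exists_isCompact_subset_measure_inter_pos_diff_pos [CompleteSpace X]
    [TopologicalSpace.SeparableSpace X] [BorelSpace X] {B E : Set X} (hB : MeasurableSet B)
    (hBfin : m B ≠ ∞) (hE : MeasurableSet E) (hBE : 0 < m (B ∩ E)) (hBEc : 0 < m (B \ E)) :
    ∃ K ⊆ B, IsCompact K ∧ 0 < m (K ∩ E) ∧ 0 < m (K \ E) := by
  obtain ⟨K₁, hK₁, hK₁c, hK₁pos⟩ := (hB.inter hE).exists_lt_isCompact_of_ne_top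
    (measure_ne_top_of_subset inter_subset_left hBfin) hBE
  obtain ⟨K₂, hK₂, hK₂c, hK₂pos⟩ := (hB.diff hE).exists_lt_isCompact_of_ne_top
    (measure_ne_top_of_subset sdiff_subset hBfin) hBEc
  refine ⟨K₁ ∪ K₂, union_subset (hK₁.trans inter_subset_left) (hK₂.trans sdiff_subset),
    hK₁c.union hK₂c, hK₁pos.trans_le (measure_mono ?_), hK₂pos.trans_le (measure_mono ?_)⟩
  · exact subset_inter subset_union_left (hK₁.trans inter_subset_right)
  · exact subset_sdiff.2 ⟨subset_union_right, disjoint_sdiff_left.mono_left hK₂⟩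

lemma WeakPoincareWith.setLIntegral_abs_sub_average_le {lam : ℝ} {C_P : ℝ → ℝ}
    (hP : WeakPoincareWith lam C_P m) (hlam : 1 ≤ lam) {f : X → ℝ} (hf : LocLipOn Set.univ f)
    {R r : ℝ} (hr : 0 < r) (hrR : r < R) (x : X) (hB : m (ball x r) ≠ ∞) :
    ∫⁻ y in ball x r, ENNReal.ofReal |f y - ⨍ z in ball x r, f z ∂m| ∂m
      ≤ ENNReal.ofReal (C_P R * r) * ∫⁻ y in ball x (lam * r), mSlope f y ∂m := by
  set A := ∫⁻ y in ball x r, ENNReal.ofReal |f y - ⨍ z in ball x r, f z ∂m| ∂m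
  set S := ∫⁻ y in ball x (lam * r), mSlope f y ∂m
  rcases eq_or_ne (m (ball x r)) 0 with hB0 | hB0
  · simp [A, setLIntegral_measure_zero _ _ hB0]
  have hBB : m (ball x r) ≤ m (ball x (lam * r)) :=
    measure_mono (ball_subset_ball (le_mul_of_one_le_left hr.le hlam))
  calc A = A / m (ball x r) * m (ball x r) := (ENNReal.div_mul_cancel hB0 hB).symm
    _ ≤ ENNReal.ofReal (C_P R * r) * (S / m (ball x (lam * r)) * m (ball x (lam * r))) := by
      rw [← mul_assoc]
      gcongr
      exact hP f hf R (hr.trans hrR) x r hr hrR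
    _ ≤ ENNReal.ofReal (C_P R * r) * S := by
      rw [div_eq_mul_inv, mul_assoc]
      gcongr
      exact mul_le_of_le_one_right' (ENNReal.inv_mul_le_one _)

lemma WeakPoincareWith.min_measure_le [OpensMeasurableSpace X] {lam : ℝ} {C_P : ℝ → ℝ}
    (hP : WeakPoincareWith lam C_P m) (hlam : 1 ≤ lam) {R r : ℝ} (hr : 0 < r) (hrR : r < R)
    {x : X} (hB : m (ball x r) ≠ ∞) {K E : Set X} (hKB : K ⊆ ball x r) (hK : MeasurableSet K)
    (hE : MeasurableSet E) {g : X → ℝ} (hg : LocLipOn Set.univ g) :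
    min (m (K ∩ E)) (m (K \ E)) ≤ ENNReal.ofReal (C_P R * r) * ∫⁻ y, mSlope g y ∂m
      + ∫⁻ z in K, ENNReal.ofReal |g z - Set.indicator E (fun _ => (1:ℝ)) z| ∂m := by
  set c := ⨍ z in ball x r, g z ∂m
  have h_meas : Measurable fun z => ENNReal.ofReal |g z - c| :=
    ENNReal.measurable_ofReal.comp ((hg.continuous.measurable.sub measurable_const).abs)
  calc min (m (K ∩ E)) (m (K \ E))
      ≤ ∫⁻ z in K, ENNReal.ofReal |Set.indicator E (fun _ => (1:ℝ)) z - c| ∂m :=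
        min_measure_le_setLIntegral_abs_indicator_sub hE hK c
    _ ≤ ∫⁻ z in K, (ENNReal.ofReal |g z - c|
          + ENNReal.ofReal |g z - Set.indicator E (fun _ => (1:ℝ)) z|) ∂m := by
        refine lintegral_mono fun z => ?_
        rw [← ENNReal.ofReal_add (abs_nonneg _) (abs_nonneg _)]
        refine ENNReal.ofReal_le_ofReal ?_
        rw [add_comm, abs_sub_comm (g z)]
        exact abs_sub_le _ _ _
    _ = ∫⁻ z in K, ENNReal.ofReal |g z - c| ∂m
          + ∫⁻ z in K, ENNReal.ofReal |g z - Set.indicator E (fun _ => (1:ℝ)) z| ∂m :=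
        lintegral_add_left h_meas _
    _ ≤ ENNReal.ofReal (C_P R * r) * ∫⁻ y, mSlope g y ∂m
          + ∫⁻ z in K, ENNReal.ofReal |g z - Set.indicator E (fun _ => (1:ℝ)) z| ∂m := by
        gcongr
        calc ∫⁻ z in K, ENNReal.ofReal |g z - c| ∂m
            ≤ ∫⁻ z in ball x r, ENNReal.ofReal |g z - c| ∂m := lintegral_mono_set hKB
          _ ≤ ENNReal.ofReal (C_P R * r) * ∫⁻ y in ball x (lam * r), mSlope g y ∂m :=
            hP.setLIntegral_abs_sub_average_le hlam hg hr hrR x hB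
          _ ≤ ENNReal.ofReal (C_P R * r) * ∫⁻ y, mSlope g y ∂m :=
            mul_le_mul' le_rfl (setLIntegral_le_lintegral _ _)

lemma exists_locLipOn_approx_of_totVar_univ_lt {f : X → ℝ} {ε : ℝ≥0∞}
    (h : totVar m f Set.univ < ε) {K : Set X} (hK : IsCompact K) {δ : ℝ≥0∞} (hδ : 0 < δ) :
    ∃ g : X → ℝ, LocLipOn Set.univ g ∧ ∫⁻ y, mSlope g y ∂m < ε ∧
      ∫⁻ z in K, ENNReal.ofReal |g z - f z| ∂m < δ := by
  simp only [totVar, iInf_lt_iff, univ_subset_iff] at h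
  obtain ⟨_, -, rfl, fn, hlip, hconv, hliminf⟩ := h
  rw [Measure.restrict_univ] at hliminf
  have h_slope := frequently_lt_of_liminf_lt (by isBoundedDefault) hliminf
  have h_L1 := (hconv K (subset_univ K) hK).eventually_lt_const hδ
  obtain ⟨n, hslope, hL1⟩ := (h_slope.and_eventually h_L1).exists
  exact ⟨fn n, hlip n, hslope, hL1⟩

end

theorem perimeter_pos_of_nontrivial_general
    {X : Type*} [MetricSpace X] [CompleteSpace X] [TopologicalSpace.SeparableSpace X]
    [MeasurableSpace X] [BorelSpace X] (m : Measure X)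
    (hbf : BoundedlyFinite m) (hPI : IsPIspace m)
    (E : Set X) (hEm : MeasurableSet E)
    (hE : 0 < m E) (hEc : 0 < m (Set.univ \ E)) :
    0 < Per m E Set.univ := by
  obtain ⟨-, lam, hlam, C_P, -, hP⟩ := hPI
  obtain ⟨x, -⟩ := nonempty_of_measure_ne_zero hE.ne'
  obtain ⟨n, hn, hBE, hBEc⟩ := ((eventually_gt_atTop 0).and
    ((eventually_measure_inter_ball_pos hE x).and (eventually_measure_inter_ball_pos hEc x))).exists
  rw [← inter_sdiff_assoc, inter_univ] at hBEc
  have hr : (0 : ℝ) < n := Nat.cast_pos.2 hn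
  have hB : m (ball x n) ≠ ∞ := (hbf _ isBounded_ball).ne
  obtain ⟨K, hKB, hK, hKE, hKEc⟩ :=
    exists_isCompact_subset_measure_inter_pos_diff_pos measurableSet_ball hB hEm hBE hBEc
  set M := min (m (K ∩ E)) (m (K \ E))
  set c := ENNReal.ofReal (C_P (n + 1) * n)
  have hM : M / 2 ≠ 0 := (ENNReal.half_pos (lt_min hKE hKEc).ne').ne'
  refine pos_iff_ne_zero.2 fun hPer => ?_
  have hε : Per m E Set.univ < M / 2 / c := hPer.trans_lt (ENNReal.div_pos hM ENNReal.ofReal_ne_top)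
  obtain ⟨g, hg, hslope, hL1⟩ :=
    exists_locLipOn_approx_of_totVar_univ_lt hε hK (pos_iff_ne_zero.2 hM)
  have h_slope : c * ∫⁻ y, mSlope g y ∂m ≤ M / 2 :=
    (mul_le_mul' le_rfl hslope.le).trans ENNReal.mul_div_le
  refine lt_irrefl M ?_
  calc M ≤ c * ∫⁻ y, mSlope g y ∂m
        + ∫⁻ z in K, ENNReal.ofReal |g z - Set.indicator E (fun _ => (1:ℝ)) z| ∂m :=
      hP.min_measure_le hlam hr (lt_add_one _) hB hKB hK.measurableSet hEm hg
    _ < M / 2 + M / 2 := ENNReal.add_lt_add_of_le_of_lt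
        (ENNReal.mul_ne_top ENNReal.ofReal_ne_top (ne_top_of_lt hslope)) h_slope hL1
    _ = M := ENNReal.add_halves M

/-- **Nontrivial sets have positive perimeter** (Remark 2.7): in a length PI space, a set
of finite perimeter with `m(E) > 0` and `m(X \ E) > 0` satisfies `P(E) > 0`. -/
theorem perimeter_pos_of_nontrivial
    {X : Type*} [MetricSpace X] [CompleteSpace X] [TopologicalSpace.SeparableSpace X]
    [MeasurableSpace X] [BorelSpace X] (m : Measure X)
    (hbf : BoundedlyFinite m) (hPI : IsPIspace m) (hlen : IsLengthSpace X)
    (E : Set X) (hEm : MeasurableSet E) (hEp : HasFinPer m E)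
    (hE : 0 < m E) (hEc : 0 < m (Set.univ \ E)) :
    0 < Per m E Set.univ :=
  perimeter_pos_of_nontrivial_general m hbf hPI E hEm hE hEc
end
end

section
/- Consider the metric measure space (ℝ, d_eucl, m), where m is the measure with density |x|^{−1/2} with respect to the Lebesgue measure. Then for every y > 0 the ball B_y(y) = (0, 2y) is not a set of locally finite perimeter in this space; more precisely, |Dχ_{(0,2y)}|(Ω) = +∞ for every open set Ω containing 0. -/
/-!
Near `0` the density `|x|^(-1/2)` is at least `δ^(-1/2)` on `[-δ, δ]`. A locally Lipschitz `fₙ`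
that is `L¹`-close to the indicator of `(0, 2y)` therefore takes a value near `0` at some
`a ∈ (-δ, 0)` and a value near `1` at some `b ∈ (0, δ)`. Being Lipschitz on `[a, b]`, `fₙ` is
absolutely continuous there, so `1/2 ≤ |fₙ b - fₙ a| ≤ ∫ₐᵇ |fₙ'| ≤ ∫ₐᵇ lip fₙ`, and weighting by
the density bounds the total variation below by `δ^(-1/2) / 2` for every small `δ`.
-/

open MeasureTheory Metric Set Filter Topology ENNReal Bornology
open scoped symmDiff

noncomputable section

variable {X : Type*}

theorem LocLipOn.locallyLipschitzOn [MetricSpace X] {Ω : Set X} {f : X → ℝ}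
    (hf : LocLipOn Ω f) : LocallyLipschitzOn Ω f := by
  intro x hx
  obtain ⟨r, hr, K, hK⟩ := hf x hx
  exact ⟨K, _, mem_nhdsWithin_iff_exists_mem_nhds_inter.2 ⟨_, ball_mem_nhds x hr, subset_rfl⟩, hK⟩

theorem TendstoL1loc.eventually_exists_abs_sub_lt [MetricSpace X] [MeasurableSpace X]
    {m : Measure X} {Ω K s : Set X} {fn : ℕ → X → ℝ} {f : X → ℝ}
    (hconv : TendstoL1loc m Ω fn f) (hKΩ : K ⊆ Ω) (hK : IsCompact K) (hsK : s ⊆ K)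
    (hs : MeasurableSet s) (hms : m s ≠ 0) {ε : ℝ} (hε : 0 < ε) :
    ∀ᶠ n in atTop, ∃ x ∈ s, |fn n x - f x| < ε := by
  have hpos : 0 < ENNReal.ofReal ε * m s := ENNReal.mul_pos (by simpa using hε) hms
  filter_upwards [(hconv K hKΩ hK).eventually_lt_const hpos] with n hn
  by_contra! hge
  refine hn.not_ge ?_
  calc ENNReal.ofReal ε * m s = ∫⁻ _ in s, ENNReal.ofReal ε ∂m := (setLIntegral_const _ _).symm
    _ ≤ ∫⁻ x in s, ENNReal.ofReal |fn n x - f x| ∂m :=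
      setLIntegral_mono' hs fun x hx => ENNReal.ofReal_le_ofReal (hge x hx)
    _ ≤ ∫⁻ x in K, ENNReal.ofReal |fn n x - f x| ∂m := lintegral_mono_set hsK

theorem slopeOn_eq_enorm_deriv {Ω : Set ℝ} {f : ℝ → ℝ} {x : ℝ} (hΩ : Ω ∈ 𝓝 x)
    (hf : DifferentiableAt ℝ f x) : slopeOn Ω f x = ‖deriv f x‖ₑ := by
  have hslope := (hasDerivAt_iff_tendsto_slope.1 hf.hasDerivAt).enorm
  have hnhds : 𝓝[Ω \ {x}] x = 𝓝[≠] x := nhdsWithin_inter_of_mem (mem_nhdsWithin_of_mem_nhds hΩ)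
  rw [slopeOn, hnhds]
  refine (hslope.congr fun y => ?_).limsup_eq
  rw [slope_def_field, Real.enorm_eq_ofReal_abs, abs_div, abs_sub_comm (f y), abs_sub_comm y,
    Real.dist_eq]

theorem enorm_sub_le_lintegral_slopeOn {Ω : Set ℝ} {f : ℝ → ℝ} (hf : LocLipOn Ω f) {a b : ℝ}
    (hab : a ≤ b) (hΩ : Icc a b ⊆ Ω) :
    ‖f b - f a‖ₑ ≤ ∫⁻ x in Ioo a b, slopeOn Ω f x := by
  obtain ⟨K, hK⟩ :=
    (hf.locallyLipschitzOn.mono hΩ).exists_lipschitzOnWith_of_compact isCompact_Icc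
  have hac : AbsolutelyContinuousOnInterval f a b :=
    LipschitzOnWith.absolutelyContinuousOnInterval (uIcc_of_le hab ▸ hK)
  calc ‖f b - f a‖ₑ = ‖∫ x in Ioo a b, deriv f x‖ₑ := by
        rw [← hac.integral_deriv_eq_sub, intervalIntegral.integral_of_le hab,
          integral_Ioc_eq_integral_Ioo]
    _ ≤ ∫⁻ x in Ioo a b, ‖deriv f x‖ₑ := enorm_integral_le_lintegral_enorm _
    _ ≤ ∫⁻ x in Ioo a b, slopeOn Ω f x := by
      refine lintegral_mono_ae ?_
      filter_upwards [ae_restrict_mem measurableSet_Ioo,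
        ae_restrict_of_ae hac.ae_differentiableAt] with x hx hdiff
      have hΩx : Ω ∈ 𝓝 x := mem_of_superset (Ioo_mem_nhds hx.1 hx.2) (Ioo_subset_Icc_self.trans hΩ)
      rw [slopeOn_eq_enorm_deriv hΩx (hdiff (Ioo_subset_Icc_self.trans Icc_subset_uIcc hx))]

theorem smul_restrict_le_restrict_withDensity {α : Type*} [MeasurableSpace α] {μ : Measure α}
    {w : α → ℝ≥0∞} {c : ℝ≥0∞} {s : Set α} (hs : MeasurableSet s)
    (hcw : ∀ᵐ x ∂μ.restrict s, c ≤ w x) :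
    c • μ.restrict s ≤ (μ.withDensity w).restrict s := by
  rw [restrict_withDensity hs, ← withDensity_const]
  exact withDensity_mono hcw

theorem smul_volume_restrict_Icc_le_withDensity_abs_rpow {p δ : ℝ} (hp : p ≤ 0) :
    ENNReal.ofReal (δ ^ p) • volume.restrict (Icc (-δ) δ) ≤
      (volume.withDensity fun x => ENNReal.ofReal (|x| ^ p)).restrict (Icc (-δ) δ) := by
  refine smul_restrict_le_restrict_withDensity measurableSet_Icc ?_
  filter_upwards [ae_restrict_mem measurableSet_Icc,
    ae_restrict_of_ae (volume.ae_ne (0 : ℝ))] with x hx hx0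
  exact ENNReal.ofReal_le_ofReal
    (Real.rpow_le_rpow_of_nonpos (abs_pos.2 hx0) (abs_le.2 hx) hp)

theorem le_liminf_lintegral_slopeOn_of_jump {m : Measure ℝ} {Ω : Set ℝ} {χ : ℝ → ℝ}
    {fn : ℕ → ℝ → ℝ} {δ : ℝ} {c : ℝ≥0∞} (hδ : 0 < δ) (hΩ : Icc (-δ) δ ⊆ Ω) (hc : c ≠ 0)
    (hcm : c • volume.restrict (Icc (-δ) δ) ≤ m.restrict (Icc (-δ) δ))
    (hχ0 : EqOn χ 0 (Ioo (-δ) 0)) (hχ1 : EqOn χ 1 (Ioo 0 δ))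
    (hlip : ∀ n, LocLipOn Ω (fn n)) (hconv : TendstoL1loc m Ω fn χ) :
    c / 2 ≤ liminf (fun n => ∫⁻ x in Ω, slopeOn Ω (fn n) x ∂m) atTop := by
  have hnear : ∀ s ⊆ Icc (-δ) δ, MeasurableSet s → volume s ≠ 0 →
      ∀ᶠ n in atTop, ∃ x ∈ s, |fn n x - χ x| < 1 / 4 := by
    intro s hsI hs hvs
    have hms : c * volume s ≤ m s :=
      calc c * volume s = (c • volume.restrict (Icc (-δ) δ)) s := by
            rw [Measure.smul_apply, Measure.restrict_eq_self _ hsI, smul_eq_mul]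
        _ ≤ m.restrict (Icc (-δ) δ) s := hcm s
        _ ≤ m s := Measure.restrict_apply_le _ _
    exact hconv.eventually_exists_abs_sub_lt hΩ isCompact_Icc hsI hs
      (ne_bot_of_le_ne_bot (mul_ne_zero hc hvs) hms) (by norm_num)
  have hneg := hnear (Ioo (-δ) 0) (Ioo_subset_Icc_self.trans (Icc_subset_Icc_right hδ.le))
    measurableSet_Ioo (by simpa using hδ)
  have hpos := hnear (Ioo 0 δ) (Ioo_subset_Icc_self.trans (Icc_subset_Icc_left (by linarith)))
    measurableSet_Ioo (by simpa using hδ)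
  refine le_liminf_of_le (by isBoundedDefault) ?_
  filter_upwards [hneg, hpos] with n ⟨a, ha, hfa⟩ ⟨b, hb, hfb⟩
  rw [hχ0 ha, Pi.zero_apply, sub_zero] at hfa
  rw [hχ1 hb, Pi.one_apply] at hfb
  have hab : Icc a b ⊆ Icc (-δ) δ := Icc_subset_Icc ha.1.le hb.2.le
  have hjump : (2 : ℝ≥0∞)⁻¹ ≤ ‖fn n b - fn n a‖ₑ := by
    rw [Real.enorm_eq_ofReal_abs, ← ENNReal.ofReal_ofNat 2, ← ENNReal.ofReal_inv_of_pos two_pos]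
    refine ENNReal.ofReal_le_ofReal ?_
    rw [abs_lt] at hfa hfb
    exact le_abs.2 (Or.inl (by linarith [hfa.1, hfa.2, hfb.1, hfb.2]))
  calc c / 2 = c * (2 : ℝ≥0∞)⁻¹ := div_eq_mul_inv c 2
    _ ≤ c * ∫⁻ x in Icc (-δ) δ, slopeOn Ω (fn n) x := by
      gcongr
      calc (2 : ℝ≥0∞)⁻¹ ≤ ‖fn n b - fn n a‖ₑ := hjump
        _ ≤ ∫⁻ x in Ioo a b, slopeOn Ω (fn n) x :=
          enorm_sub_le_lintegral_slopeOn (hlip n) (ha.2.trans hb.1).le (hab.trans hΩ)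
        _ ≤ ∫⁻ x in Icc (-δ) δ, slopeOn Ω (fn n) x :=
          lintegral_mono_set (Ioo_subset_Icc_self.trans hab)
    _ = ∫⁻ x, slopeOn Ω (fn n) x ∂(c • volume.restrict (Icc (-δ) δ)) := by
      rw [lintegral_smul_measure, smul_eq_mul]
    _ ≤ ∫⁻ x in Icc (-δ) δ, slopeOn Ω (fn n) x ∂m := lintegral_mono' hcm le_rfl
    _ ≤ ∫⁻ x in Ω, slopeOn Ω (fn n) x ∂m := lintegral_mono_set hΩ

theorem totVar_withDensity_abs_rpow_eq_top {p ρ : ℝ} (hp : p < 0) (hρ : 0 < ρ) {χ : ℝ → ℝ}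
    (hχ0 : EqOn χ 0 (Ioo (-ρ) 0)) (hχ1 : EqOn χ 1 (Ioo 0 ρ)) {B : Set ℝ} (hB : (0:ℝ) ∈ B) :
    totVar (volume.withDensity fun x => ENNReal.ofReal (|x| ^ p)) χ B = ∞ := by
  simp only [totVar, iInf_eq_top]
  intro Ω hΩ hBΩ fn hlip hconv
  obtain ⟨R, hR, hRΩ⟩ := Metric.isOpen_iff.1 hΩ 0 (hBΩ hB)
  refine ENNReal.eq_top_of_forall_nnreal_le fun r => ?_
  have hlarge := (tendsto_rpow_neg_nhdsGT_zero hp).eventually_ge_atTop (2 * r : ℝ)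
  have hsmall : ∀ᶠ δ in 𝓝[>] (0:ℝ), δ < R ∧ δ < ρ :=
    nhdsWithin_le_nhds <| (eventually_lt_nhds hR).and (eventually_lt_nhds hρ)
  obtain ⟨δ, hδr, ⟨hδR, hδρ⟩, hδ⟩ := (hlarge.and (hsmall.and self_mem_nhdsWithin)).exists
  have hIcc : Icc (-δ) δ ⊆ Ω := fun x hx => hRΩ <| by
    rw [mem_ball_zero_iff, Real.norm_eq_abs]
    exact (abs_le.2 hx).trans_lt hδR
  calc (r : ℝ≥0∞) ≤ ENNReal.ofReal (δ ^ p) / 2 := by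
        rw [ENNReal.le_div_iff_mul_le (by norm_num) (by norm_num), ← ENNReal.ofReal_coe_nnreal,
          ← ENNReal.ofReal_ofNat 2, ← ENNReal.ofReal_mul (by positivity)]
        exact ENNReal.ofReal_le_ofReal (by linarith)
    _ ≤ _ := le_liminf_lintegral_slopeOn_of_jump hδ hIcc
        (ENNReal.ofReal_pos.2 (Real.rpow_pos_of_pos hδ p)).ne'
        (smul_volume_restrict_Icc_le_withDensity_abs_rpow hp.le)
        (hχ0.mono (Ioo_subset_Ioo_left (neg_le_neg hδρ.le)))
        (hχ1.mono (Ioo_subset_Ioo_right hδρ.le)) hlip hconv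

/-- **A PI space where the growth condition fails** (Remark 3.5): on `ℝ` with the
measure of density `|x|^{-1/2}`, for every `y > 0` the ball `B_y(y) = (0, 2y)` is not a
set of locally finite perimeter; more precisely its total variation is infinite on
every open neighbourhood of `0`. -/
theorem example_ball_not_locally_finite_perimeter
    (m : Measure ℝ)
    (hm : m = volume.withDensity fun x => ENNReal.ofReal (|x| ^ (-(1:ℝ) / 2))) :
    ∀ y : ℝ, 0 < y →
      (¬ HasLocFinPer m (Metric.ball y y)) ∧
      ∀ Ω : Set ℝ, IsOpen Ω → (0:ℝ) ∈ Ω →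
        totVar m (Set.indicator (Metric.ball y y) fun _ => (1:ℝ)) Ω = ∞ := by
  intro y hy
  have hball : ball y y = Ioo 0 (2 * y) := by rw [Real.ball_eq_Ioo, sub_self, two_mul]
  have htotVar : ∀ B : Set ℝ, (0:ℝ) ∈ B →
      totVar m (Set.indicator (ball y y) fun _ => (1:ℝ)) B = ∞ := by
    intro B hB
    rw [hm]
    refine totVar_withDensity_abs_rpow_eq_top (by norm_num) (by positivity : 0 < 2 * y)
      (fun x hx => indicator_of_notMem ?_ _) (fun x hx => indicator_of_mem ?_ _) hB
    · rw [hball]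
      exact fun h => h.1.not_gt hx.2
    · rwa [hball]
  refine ⟨fun hloc => ?_, fun Ω _ => htotVar Ω⟩
  obtain ⟨r, hr, hfin⟩ := hloc 0
  exact hfin.ne (htotVar _ (mem_ball_self hr))

end
end
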